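/- For all n ≥ 3, the number of nonnesting permutations of the multiset {1,1,2,2,…,n,n} that avoid all three patterns 123, 231, and 312 equals n. -/

import Mathlib

/-!
Call a triple of distinct letters a cyclic ascent if it is order-isomorphic to `123`, `231` or
`312`; the word must contain no cyclic ascent. Transposing two letters of a triple reverses its
cyclic orientation. Hence if `a b a b` occurs in `w`, any third letter `z` sits on the same side of
an occurrence of `a b` and of one of `b a`, producing triples of both orientations; for `n ≥ 3`
such a `z` exists. Together with nonnesting, this forces the two copies of every letter to be
adjacent, so `w = u₁ u₁ u₂ u₂ ⋯` for a permutation `u` of `{1,…,n}` without cyclic ascents. In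
such a `u` every letter is followed by its cyclic predecessor, so `u = k (k-1) ⋯ 1 n ⋯ (k+1)` is
determined by its first letter `k`, which leaves `n` words.
-/

/-- `w` is a permutation of the multiset `{1,1,2,2,…,n,n}`:
a word in which every value in `{1,…,n}` occurs exactly twice
and no other value occurs. -/
def IsMultisetPerm (n : ℕ) (w : List ℕ) : Prop :=
  ∀ i : ℕ, w.count i = if 1 ≤ i ∧ i ≤ n then 2 else 0

/-- `t` is order-isomorphic to the word `σ`:
same length, and entries compare (both `<` and `=`) in the same way. -/
def OrderIsoWord (t σ : List ℕ) : Prop :=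
  t.length = σ.length ∧
  ∀ r s : ℕ, r < σ.length → s < σ.length →
    ((t.getD r 0 < t.getD s 0 ↔ σ.getD r 0 < σ.getD s 0) ∧
     (t.getD r 0 = t.getD s 0 ↔ σ.getD r 0 = σ.getD s 0))

/-- `w` contains the pattern `σ`: some subsequence of `w`
is order-isomorphic to `σ`. -/
def Contains (w σ : List ℕ) : Prop :=
  ∃ t : List ℕ, t.Sublist w ∧ OrderIsoWord t σ

/-- `w` avoids the pattern `σ`. -/
def Avoids (w σ : List ℕ) : Prop := ¬ Contains w σ

/-- `w` is a nonnesting permutation of `{1,1,2,2,…,n,n}`: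
it avoids the patterns `1221` and `2112`. -/
def IsNonnesting (n : ℕ) (w : List ℕ) : Prop :=
  IsMultisetPerm n w ∧ Avoids w [1,2,2,1] ∧ Avoids w [2,1,1,2]

namespace List

variable {α : Type*}

theorem map_getD_sublist {w : List α} {d : α} {is : List ℕ} (hs : is.Pairwise (· < ·))
    (hb : ∀ i ∈ is, i < w.length) : is.map (w.getD · d) <+ w := by
  have h := map_getElem_sublist (l := w) (is := is.pmap Fin.mk hb)
    ((pairwise_pmap hb).2 (hs.imp fun h _ _ => h))
  rw [map_pmap, pmap_eq_map_attach] at h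
  convert h using 1
  conv_lhs => rw [← attach_map_subtype_val is, map_map]
  exact map_congr_left fun x _ => getD_eq_getElem ..

theorem exists_map_getD_eq_of_sublist {s w : List α} (d : α) (h : s <+ w) :
    ∃ is : List ℕ, is.Pairwise (· < ·) ∧ (∀ i ∈ is, i < w.length) ∧ s = is.map (w.getD · d) := by
  obtain ⟨is, rfl, hs⟩ := sublist_eq_map_getElem h
  refine ⟨is.map (↑), by simpa [pairwise_map] using hs, by simp, ?_⟩
  simp

theorem triple_sublist_iff {a b c : α} {w : List α} (d : α) :
    [a, b, c] <+ w ↔ ∃ i j l, i < j ∧ j < l ∧ l < w.length ∧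
      w.getD i d = a ∧ w.getD j d = b ∧ w.getD l d = c := by
  constructor
  · intro h
    obtain ⟨is, hs, hb, he⟩ := exists_map_getD_eq_of_sublist d h
    rcases is with _ | ⟨i, _ | ⟨j, _ | ⟨l, _ | _⟩⟩⟩ <;> simp at he hs hb
    exact ⟨i, j, l, by omega, by omega, by omega, he.1.symm, he.2.1.symm, he.2.2.symm⟩
  · rintro ⟨i, j, l, hij, hjl, hl, rfl, rfl, rfl⟩
    exact map_getD_sublist (is := [i, j, l]) (by simp; omega) (by simp; omega)

theorem quadruple_sublist_iff {a b c e : α} {w : List α} (d : α) :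
    [a, b, c, e] <+ w ↔ ∃ i j l m, i < j ∧ j < l ∧ l < m ∧ m < w.length ∧
      w.getD i d = a ∧ w.getD j d = b ∧ w.getD l d = c ∧ w.getD m d = e := by
  constructor
  · intro h
    obtain ⟨is, hs, hb, he⟩ := exists_map_getD_eq_of_sublist d h
    rcases is with _ | ⟨i, _ | ⟨j, _ | ⟨l, _ | ⟨m, _ | _⟩⟩⟩⟩ <;> simp at he hs hb
    exact ⟨i, j, l, m, by omega, by omega, by omega, by omega,
      he.1.symm, he.2.1.symm, he.2.2.1.symm, he.2.2.2.symm⟩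
  · rintro ⟨i, j, l, m, hij, hjl, hlm, hm, rfl, rfl, rfl, rfl⟩
    exact map_getD_sublist (is := [i, j, l, m]) (by simp; omega) (by simp; omega)

theorem getD_mem {w : List α} {d : α} {i : ℕ} (hi : i < w.length) : w.getD i d ∈ w := by
  rw [getD_eq_getElem _ _ hi]
  exact getElem_mem hi

theorem exists_getD_eq_of_mem {a : α} {w : List α} (d : α) (h : a ∈ w) :
    ∃ i < w.length, w.getD i d = a := by
  obtain ⟨i, hi, rfl⟩ := mem_iff_getElem.1 h
  exact ⟨i, hi, getD_eq_getElem _ _ hi⟩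

theorem exists_ne_getD_eq_of_two_le_count [BEq α] [LawfulBEq α] {w : List α} {d : α} {i : ℕ}
    (h : 2 ≤ w.count (w.getD i d)) :
    ∃ j < w.length, j ≠ i ∧ w.getD j d = w.getD i d := by
  obtain ⟨is, hs, hb, he⟩ := exists_map_getD_eq_of_sublist d (replicate_sublist_iff.2 h)
  rcases is with _ | ⟨j₁, _ | ⟨j₂, _ | _⟩⟩ <;> simp [replicate_succ] at he hs hb
  by_cases hj : j₁ = i
  · exact ⟨j₂, hb.2, by omega, he.2.symm⟩
  · exact ⟨j₁, hb.1, hj, he.1.symm⟩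

def doubled (u : List α) : List α := u.flatMap fun x => [x, x]

@[simp] theorem doubled_cons (x : α) (u : List α) : doubled (x :: u) = x :: x :: doubled u := rfl

@[simp] theorem count_doubled [BEq α] (a : α) (u : List α) :
    (doubled u).count a = 2 * u.count a := by
  induction u with
  | nil => rfl
  | cons x u ih => simp only [doubled_cons, count_cons, ih]; split_ifs <;> omega

@[simp] theorem length_doubled (u : List α) : (doubled u).length = 2 * u.length := by
  induction u with
  | nil => rfl
  | cons x u ih => simp [ih]; omega

theorem getD_doubled (u : List α) (d : α) (i : ℕ) : (doubled u).getD i d = u.getD (i / 2) d := by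
  induction u generalizing i with
  | nil => simp
  | cons x u ih =>
    rcases i with _ | _ | i
    · rfl
    · rfl
    · rw [doubled_cons, getD_cons_succ, getD_cons_succ, ih, show (i + 2) / 2 = i / 2 + 1 by omega,
        getD_cons_succ]

theorem sublist_doubled (u : List α) : u <+ doubled u := by
  induction u with
  | nil => exact nil_sublist _
  | cons x u ih => exact (ih.cons x).cons_cons x

theorem exists_eq_doubled [BEq α] [LawfulBEq α] : ∀ {w : List α}, (∀ x ∈ w, w.count x = 2) →
    (∀ a b, a ≠ b → ¬[a, b, a] <+ w) → ∃ u, w = doubled u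
  | [], _, _ => ⟨[], rfl⟩
  | [x], hc, _ => by simpa using hc x
  | x :: y :: w, hc, haba => by
    have hxy : y = x := by
      by_contra hyx
      have hx : x ∈ w := by
        have := hc x (mem_cons_self ..)
        simp [hyx] at this
        exact count_pos_iff.1 (by omega)
      exact haba x y (Ne.symm hyx) ((singleton_sublist.2 hx).cons_cons y |>.cons_cons x)
    subst y
    have hxw : x ∉ w := by
      have := hc x (mem_cons_self ..)
      simp at this
      exact count_eq_zero.1 this
    obtain ⟨u, rfl⟩ := exists_eq_doubled (w := w)
      (fun x' hx' => by
        have := hc x' (mem_cons_of_mem _ (mem_cons_of_mem _ hx'))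
        simpa [count_cons, ne_of_mem_of_not_mem hx' hxw |>.symm] using this)
      (fun a b hab h => haba a b hab ((h.cons x).cons x))
    exact ⟨x :: u, rfl⟩

end List

open List

theorem orderIsoWord_iff {t σ : List ℕ} : OrderIsoWord t σ ↔ t.length = σ.length ∧
    ∀ r s : Fin σ.length,
      (t.getD r 0 < t.getD s 0 ↔ σ.getD r 0 < σ.getD s 0) ∧
      (t.getD r 0 = t.getD s 0 ↔ σ.getD r 0 = σ.getD s 0) :=
  and_congr_right fun _ => ⟨fun h r s => h r s r.2 s.2, fun h r s hr hs => h ⟨r, hr⟩ ⟨s, hs⟩⟩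

theorem avoids_iff {w σ : List ℕ} : Avoids w σ ↔ ∀ t, t <+ w → ¬OrderIsoWord t σ := by
  simp [Avoids, Contains]

def CyclicAscent (a b c : ℕ) : Prop := a < b ∧ b < c ∨ b < c ∧ c < a ∨ c < a ∧ a < b

def CyclicAscentFree (w : List ℕ) : Prop := ∀ a b c, [a, b, c] <+ w → ¬CyclicAscent a b c

theorem avoids_123_231_312_iff {w : List ℕ} :
    (Avoids w [1,2,3] ∧ Avoids w [2,3,1] ∧ Avoids w [3,1,2]) ↔ CyclicAscentFree w := by
  simp only [avoids_iff]
  constructor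
  · rintro ⟨h123, h231, h312⟩ a b c h (h' | h' | h')
    · exact h123 _ h (by simp [orderIsoWord_iff, Fin.forall_fin_succ]; omega)
    · exact h312 _ h (by simp [orderIsoWord_iff, Fin.forall_fin_succ]; omega)
    · exact h231 _ h (by simp [orderIsoWord_iff, Fin.forall_fin_succ]; omega)
  · intro h
    refine ⟨?_, ?_, ?_⟩ <;> intro t ht hiso <;>
      obtain ⟨a, b, c, rfl⟩ := length_eq_three.1 hiso.1 <;>
      simp [orderIsoWord_iff, Fin.forall_fin_succ] at hiso <;>
      exact h a b c ht (by unfold CyclicAscent; omega)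

theorem avoids_1221_2112_iff {w : List ℕ} :
    (Avoids w [1,2,2,1] ∧ Avoids w [2,1,1,2]) ↔ ∀ a b, a ≠ b → ¬[a, b, b, a] <+ w := by
  simp only [avoids_iff]
  constructor
  · rintro ⟨h1221, h2112⟩ a b hab h
    rcases Nat.lt_or_gt_of_ne hab with h' | h'
    · exact h1221 _ h (by simp [orderIsoWord_iff, Fin.forall_fin_succ]; omega)
    · exact h2112 _ h (by simp [orderIsoWord_iff, Fin.forall_fin_succ]; omega)
  · intro h
    refine ⟨?_, ?_⟩ <;> intro t ht hiso <;> obtain ⟨a, b, c, d, rfl⟩ := length_eq_four.1 hiso.1 <;>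
    · obtain ⟨rfl, rfl, hab⟩ : b = c ∧ a = d ∧ a ≠ b := by
        simp [orderIsoWord_iff, Fin.forall_fin_succ] at hiso; omega
      exact h a b hab ht

theorem IsMultisetPerm.mem_iff {n v : ℕ} {w : List ℕ} (hw : IsMultisetPerm n w) :
    v ∈ w ↔ 1 ≤ v ∧ v ≤ n := by
  rw [← count_pos_iff, hw v]
  split_ifs with h <;> simp [h]

theorem IsMultisetPerm.count_eq_two {n v : ℕ} {w : List ℕ} (hw : IsMultisetPerm n w) (hv : v ∈ w) :
    w.count v = 2 := by
  rw [hw v, if_pos (hw.mem_iff.1 hv)]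

theorem isMultisetPerm_doubled_iff {n : ℕ} {u : List ℕ} :
    IsMultisetPerm n (doubled u) ↔ u ~ range' 1 n := by
  rw [perm_iff_count]
  refine forall_congr' fun v => ?_
  simp only [count_doubled, Nodup.count nodup_range', mem_range'_1]
  split_ifs <;> omega

theorem eq_or_eq_of_mem_of_abab_sublist {w : List ℕ} (hcyc : CyclicAscentFree w)
    {a b z : ℕ} (hab : a ≠ b) (habab : [a, b, a, b] <+ w) (hz : z ∈ w) : z = a ∨ z = b := by
  obtain ⟨p, r, q, s, hpr, hrq, hqs, hs, hp, hr, hq, hs'⟩ := (quadruple_sublist_iff 0).1 habab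
  obtain ⟨t, ht, htz⟩ := exists_getD_eq_of_mem 0 hz
  have hq' : q < w.length := hqs.trans hs
  have key {i j l x y v} (hij : i < j) (hjl : j < l) (hl : l < w.length) (hx : w.getD i 0 = x)
      (hy : w.getD j 0 = y) (hv : w.getD l 0 = v) : ¬CyclicAscent x y v :=
    hcyc _ _ _ ((triple_sublist_iff 0).2 ⟨i, j, l, hij, hjl, hl, hx, hy, hv⟩)
  by_contra! hne
  have htne : t ≠ p ∧ t ≠ r ∧ t ≠ q ∧ t ≠ s := by
    refine ⟨?_, ?_, ?_, ?_⟩ <;> rintro rfl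
    exacts [hne.1 (htz.symm.trans hp), hne.2 (htz.symm.trans hr), hne.1 (htz.symm.trans hq),
      hne.2 (htz.symm.trans hs')]
  -- Wherever `t` lies, an occurrence of `ab` and one of `ba` sit on the same side of it.
  have horient : (¬CyclicAscent z a b ∧ ¬CyclicAscent z b a) ∨ (¬CyclicAscent a z b ∧ ¬CyclicAscent b z a) ∨
      (¬CyclicAscent a b z ∧ ¬CyclicAscent b a z) := by
    obtain h | h | h | h | h : t < p ∨ p < t ∧ t < r ∨ r < t ∧ t < q ∨ q < t ∧ t < s ∨ s < t := by
      omega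
    · exact .inl ⟨key h hpr (by omega) htz hp hr, key (by omega) hrq hq' htz hr hq⟩
    · exact .inl ⟨key (by omega) hqs hs htz hq hs', key h.2 hrq hq' htz hr hq⟩
    · exact .inr (.inl ⟨key (by omega) (by omega) hs hp htz hs', key h.1 h.2 hq' hr htz hq⟩)
    · exact .inr (.inr ⟨key hpr (by omega) ht hp hr htz, key hrq h.1 ht hr hq htz⟩)
    · exact .inr (.inr ⟨key hpr (by omega) ht hp hr htz, key hrq (by omega) ht hr hq htz⟩)
  simp only [CyclicAscent] at horient
  omega

theorem not_aba_sublist {n : ℕ} {w : List ℕ} (hn : 3 ≤ n) (hw : IsMultisetPerm n w)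
    (hnest : ∀ a b, a ≠ b → ¬[a, b, b, a] <+ w)
    (hcyc : CyclicAscentFree w) {a b : ℕ} (hab : a ≠ b) :
    ¬[a, b, a] <+ w := by
  intro haba
  obtain ⟨p, r, q, hpr, hrq, hq, rfl, rfl, hqp⟩ := (triple_sublist_iff 0).1 haba
  obtain ⟨r', hr', hr'r, hb⟩ := exists_ne_getD_eq_of_two_le_count (d := 0) (i := r)
    (hw.count_eq_two (getD_mem (by omega))).ge
  obtain ⟨c, hc, hca, hcb⟩ : ∃ c ∈ w, c ≠ w.getD p 0 ∧ c ≠ w.getD r 0 := by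
    by_contra! h
    have h₁ := h 1; have h₂ := h 2; have h₃ := h 3
    simp only [hw.mem_iff] at h₁ h₂ h₃
    omega
  have hr'p : r' ≠ p := by rintro rfl; exact hab hb
  have hr'q : r' ≠ q := by rintro rfl; exact hab (hqp.symm.trans hb)
  rcases lt_or_gt_of_ne hr'p with hr'p | hr'p
  · have := eq_or_eq_of_mem_of_abab_sublist hcyc (Ne.symm hab)
      ((quadruple_sublist_iff 0).2 ⟨r', p, r, q, hr'p, hpr, hrq, hq, hb, rfl, rfl, hqp⟩) hc
    exact this.elim hcb hca
  rcases lt_or_gt_of_ne hr'q with hr'q | hr'q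
  · rcases lt_or_gt_of_ne hr'r with hr'r | hr'r
    · exact hnest _ _ hab
        ((quadruple_sublist_iff 0).2 ⟨p, r', r, q, hr'p, hr'r, hrq, hq, rfl, hb, rfl, hqp⟩)
    · exact hnest _ _ hab
        ((quadruple_sublist_iff 0).2 ⟨p, r, r', q, hpr, hr'r, hr'q, hq, rfl, rfl, hb, hqp⟩)
  · have := eq_or_eq_of_mem_of_abab_sublist hcyc hab
      ((quadruple_sublist_iff 0).2 ⟨p, r, q, r', hpr, hrq, hr'q, hr', rfl, rfl, hqp, hb⟩) hc
    exact this.elim hca hcb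

theorem exists_eq_doubled_of_perm_range' {n : ℕ} {w : List ℕ} (hn : 3 ≤ n)
    (hw : IsMultisetPerm n w) (hnest : ∀ a b, a ≠ b → ¬[a, b, b, a] <+ w)
    (hcyc : CyclicAscentFree w) :
    ∃ u, u ~ range' 1 n ∧ w = doubled u := by
  obtain ⟨u, rfl⟩ := exists_eq_doubled (fun _ hx => hw.count_eq_two hx)
    (fun _ _ hab => not_aba_sublist hn hw hnest hcyc hab)
  exact ⟨u, isMultisetPerm_doubled_iff.1 hw, rfl⟩

theorem eq_ite_of_forall_not_cyclicAscent {n a b : ℕ} (ha : 1 ≤ a ∧ a ≤ n) (hb : 1 ≤ b ∧ b ≤ n)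
    (hab : a ≠ b) (h : ∀ c, 1 ≤ c → c ≤ n → c ≠ a → c ≠ b → ¬CyclicAscent a b c) :
    b = if a = 1 then n else a - 1 := by
  by_contra hne
  unfold CyclicAscent at h
  -- the witness is the successor of `b` when `a = 1`, the predecessor of `a` otherwise
  apply h (if a = 1 then b + 1 else a - 1) <;> split_ifs at hne ⊢ <;> omega

theorem mem_iff_of_perm_range' {n v : ℕ} {u : List ℕ} (hu : u ~ range' 1 n) :
    v ∈ u ↔ 1 ≤ v ∧ v ≤ n :=
  hu.mem_iff.trans (by rw [mem_range'_1]; omega)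

theorem getD_succ_eq_of_perm_range' {n : ℕ} {u : List ℕ} (hu : u ~ range' 1 n)
    (hcyc : CyclicAscentFree u) {i : ℕ} (hi : i + 1 < u.length) :
    u.getD (i + 1) 0 = if u.getD i 0 = 1 then n else u.getD i 0 - 1 := by
  have hmem {v} := mem_iff_of_perm_range' (v := v) hu
  have hne : u.getD i 0 ≠ u.getD (i + 1) 0 := by
    have := pairwise_iff_getElem.1 (hu.nodup_iff.2 nodup_range') i (i + 1) (by omega) hi (by omega)
    rwa [← getD_eq_getElem _ 0, ← getD_eq_getElem _ 0] at this
  refine eq_ite_of_forall_not_cyclicAscent (hmem.1 (getD_mem (by omega))) (hmem.1 (getD_mem hi))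
    hne fun c hc₁ hc₂ hca hcb => ?_
  obtain ⟨t, ht, rfl⟩ := exists_getD_eq_of_mem 0 (hmem.2 ⟨hc₁, hc₂⟩)
  rcases lt_or_gt_of_ne (show t ≠ i by rintro rfl; exact hca rfl) with hti | hti
  · have := hcyc _ _ _ ((triple_sublist_iff 0).2 ⟨t, i, i + 1, hti, by omega, hi, rfl, rfl, rfl⟩)
    unfold CyclicAscent at this ⊢
    omega
  · have hti : i + 1 < t := by
      rcases (show t ≠ i + 1 by rintro rfl; exact hcb rfl).lt_or_gt with h | h <;> omega
    exact hcyc _ _ _ ((triple_sublist_iff 0).2 ⟨i, i + 1, t, by omega, hti, ht, rfl, rfl, rfl⟩)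

/-- The word `k (k-1) ⋯ 1 n (n-1) ⋯ (k+1)`. -/
def descRotation (n k : ℕ) : List ℕ := (range n).map fun i => if i < k then k - i else n + k - i

@[simp] theorem length_descRotation (n k : ℕ) : (descRotation n k).length = n := by
  simp [descRotation]

theorem getD_descRotation {n k i : ℕ} (hi : i < n) :
    (descRotation n k).getD i 0 = if i < k then k - i else n + k - i := by
  simp [descRotation, hi]

theorem descRotation_perm_range' {n k : ℕ} (hk : k ≤ n) : descRotation n k ~ range' 1 n := by
  refine (perm_ext_iff_of_nodup ?_ nodup_range').2 fun v => ?_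
  · refine nodup_range.map_on fun i hi j hj hij => ?_
    simp only [mem_range] at hi hj
    split_ifs at hij <;> omega
  · simp only [descRotation, mem_map, mem_range, mem_range'_1]
    constructor
    · rintro ⟨i, hi, rfl⟩
      split_ifs <;> omega
    · intro hv
      exact ⟨if v ≤ k then k - v else n + k - v, by split_ifs <;> omega, by split_ifs <;> omega⟩

theorem eq_descRotation_of_perm_range' {n : ℕ} {u : List ℕ} (hu : u ~ range' 1 n)
    (hcyc : CyclicAscentFree u) :
    u = descRotation n (u.getD 0 0) := by
  have hlen : u.length = n := by simpa using hu.length_eq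
  have hk (h : 0 < n) : 1 ≤ u.getD 0 0 ∧ u.getD 0 0 ≤ n :=
    (mem_iff_of_perm_range' hu).1 (getD_mem (by omega))
  have key (i : ℕ) (hi : i < n) :
      u.getD i 0 = if i < u.getD 0 0 then u.getD 0 0 - i else n + u.getD 0 0 - i := by
    induction i with
    | zero => have := hk hi; split_ifs <;> omega
    | succ i ih =>
      have := hk (by omega)
      rw [getD_succ_eq_of_perm_range' hu hcyc (by omega), ih (by omega)]
      split_ifs <;> omega
  refine ext_getElem (by simp [hlen]) fun i h₁ h₂ => ?_
  rw [← getD_eq_getElem _ 0, ← getD_eq_getElem _ 0, key i (by omega),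
    getD_descRotation (by omega)]

theorem not_cyclicAscent_of_sublist_doubled_descRotation {n k a b c : ℕ}
    (h : [a, b, c] <+ doubled (descRotation n k)) : ¬CyclicAscent a b c := by
  obtain ⟨i, j, l, hij, hjl, hl, rfl, rfl, rfl⟩ := (triple_sublist_iff 0).1 h
  simp only [length_doubled, length_descRotation] at hl
  simp only [getD_doubled, getD_descRotation (show i / 2 < n by omega),
    getD_descRotation (show j / 2 < n by omega), getD_descRotation (show l / 2 < n by omega),
    CyclicAscent]
  split_ifs <;> omega

theorem not_nesting_sublist_doubled_descRotation {n k a b : ℕ} (hab : a ≠ b) :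
    ¬[a, b, b, a] <+ doubled (descRotation n k) := by
  intro h
  obtain ⟨i, j, l, m, hij, hjl, hlm, hm, rfl, hj, hl, hm'⟩ := (quadruple_sublist_iff 0).1 h
  simp only [length_doubled, length_descRotation] at hm
  simp only [getD_doubled, getD_descRotation (show i / 2 < n by omega),
    getD_descRotation (show j / 2 < n by omega), getD_descRotation (show l / 2 < n by omega),
    getD_descRotation (show m / 2 < n by omega)] at hab hj hl hm'
  split_ifs at hab hj hl hm' <;> omega

theorem injOn_doubled_descRotation (n : ℕ) :
    Set.InjOn (fun k => doubled (descRotation n k)) (Set.Icc 1 n) := by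
  rintro k ⟨hk, hkn⟩ k' ⟨hk', -⟩ h
  have := congrArg (·.getD 0 0) h
  simp only [getD_doubled, Nat.zero_div, getD_descRotation (show 0 < n by omega)] at this
  split_ifs at this <;> omega

theorem isNonnesting_and_avoids_iff {n : ℕ} {w : List ℕ} (hn : 3 ≤ n) :
    (IsNonnesting n w ∧ Avoids w [1,2,3] ∧ Avoids w [2,3,1] ∧ Avoids w [3,1,2]) ↔
      ∃ k ∈ Set.Icc 1 n, doubled (descRotation n k) = w := by
  rw [IsNonnesting, and_assoc, avoids_1221_2112_iff, avoids_123_231_312_iff]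
  constructor
  · rintro ⟨hw, hnest, hcyc⟩
    obtain ⟨u, hu, rfl⟩ := exists_eq_doubled_of_perm_range' hn hw hnest hcyc
    have hcyc' : CyclicAscentFree u := fun a b c h => hcyc a b c (h.trans (sublist_doubled u))
    refine ⟨u.getD 0 0, (mem_iff_of_perm_range' hu).1 (getD_mem ?_), ?_⟩
    · simp [hu.length_eq]; omega
    · rw [← eq_descRotation_of_perm_range' hu hcyc']
  · rintro ⟨k, hk, rfl⟩
    exact ⟨isMultisetPerm_doubled_iff.2 (descRotation_perm_range' hk.2),
      fun _ _ => not_nesting_sublist_doubled_descRotation,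
      fun _ _ _ => not_cyclicAscent_of_sublist_doubled_descRotation⟩

theorem nonnesting_avoid_123_231_312 (n : ℕ) (hn : 3 ≤ n) :
    {w : List ℕ | IsNonnesting n w ∧
      Avoids w [1,2,3] ∧ Avoids w [2,3,1] ∧ Avoids w [3,1,2]}.ncard = n := by
  have hset : {w : List ℕ | IsNonnesting n w ∧
      Avoids w [1,2,3] ∧ Avoids w [2,3,1] ∧ Avoids w [3,1,2]} =
      (fun k => doubled (descRotation n k)) '' Set.Icc 1 n :=
    Set.ext fun _ => isNonnesting_and_avoids_iff hn
  rw [hset, (injOn_doubled_descRotation n).ncard_image, Set.ncard_Icc_nat]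
  omega
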